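/- arXiv:2604.27339 — 2 statements merged into one kernel-verified Lean document; each statement's English description precedes it below -/
import Mathlib

section
/- Vertex Rigidity Lemma: let Psi : S^{d-1}_+ -> S^{d-1}_+ be 1-Lipschitz for the round (great-circle) metric and fix every coordinate vertex, i.e. Psi(e_i) = e_i for i = 1,...,d. Then Psi is the identity map. -/
open Finset

/-- Round (great-circle) distance between unit vectors in `ℝ^d`. -/
noncomputable def dround {d : ℕ} (u v : Fin d → ℝ) : ℝ :=
  Real.arccos (∑ i, u i * v i)

/-- The closed positive spherical orthant `S^{d-1}_+`. -/
def Sphpos (d : ℕ) : Set (Fin d → ℝ) :=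
  {x | (∀ i, 0 ≤ x i) ∧ ∑ i, (x i) ^ 2 = 1}

/-- The `i`-th standard basis vector of `ℝ^d`. -/
def stdVec {d : ℕ} (i : Fin d) : Fin d → ℝ := fun j => if j = i then 1 else 0

lemma stdVec_mem {d : ℕ} (i : Fin d) : stdVec i ∈ Sphpos d := by
  constructor
  · intro j; unfold stdVec; split <;> norm_num
  · unfold stdVec
    rw [Finset.sum_eq_single i] <;> simp

lemma dround_stdVec {d : ℕ} (y : Fin d → ℝ) (i : Fin d) :
    dround y (stdVec i) = Real.arccos (y i) := by
  unfold dround stdVec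
  congr 1
  rw [Finset.sum_eq_single i]
  · simp
  · intro b _ hb; simp [hb]
  · simp

lemma coord_le_one {d : ℕ} {x : Fin d → ℝ} (hx : x ∈ Sphpos d) (i : Fin d) : x i ≤ 1 := by
  obtain ⟨hn, hs⟩ := hx
  have h1 : (x i) ^ 2 ≤ 1 := by
    rw [← hs]
    exact Finset.single_le_sum (fun j _ => sq_nonneg (x j)) (Finset.mem_univ i)
  nlinarith [hn i]

/-- Vertex Rigidity Lemma. -/
theorem vertex_rigidity {d : ℕ} (Ψ : (Fin d → ℝ) → (Fin d → ℝ))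
    (hmaps : ∀ x ∈ Sphpos d, Ψ x ∈ Sphpos d)
    (hlip : ∀ x ∈ Sphpos d, ∀ y ∈ Sphpos d, dround (Ψ x) (Ψ y) ≤ dround x y)
    (hfix : ∀ i : Fin d, Ψ (stdVec i) = stdVec i) :
    ∀ x ∈ Sphpos d, Ψ x = x := by
  intro x hx
  have hy := hmaps x hx
  have key : ∀ i, x i ≤ Ψ x i := by
    intro i
    have h := hlip x hx (stdVec i) (stdVec_mem i)
    rw [hfix i, dround_stdVec, dround_stdVec] at h
    by_contra hlt
    push_neg at hlt
    have hmemy : Ψ x i ∈ Set.Icc (-1 : ℝ) 1 :=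
      ⟨by linarith [hy.1 i], coord_le_one hy i⟩
    have hmemx : x i ∈ Set.Icc (-1 : ℝ) 1 :=
      ⟨by linarith [hx.1 i], coord_le_one hx i⟩
    have := Real.strictAntiOn_arccos hmemy hmemx hlt
    linarith
  have hsq : ∀ i ∈ Finset.univ, (x i) ^ 2 ≤ (Ψ x i) ^ 2 := by
    intro i _
    have := key i
    nlinarith [hx.1 i]
  have hsum : ∑ i, (x i) ^ 2 = ∑ i, (Ψ x i) ^ 2 := by rw [hx.2, hy.2]
  have heq := (Finset.sum_eq_sum_iff_of_le hsq).mp hsum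
  funext i
  have h2 := (heq i (Finset.mem_univ i)).symm
  nlinarith [key i, hx.1 i]
end

section
/- Permuted-Born counterexample: for a permutation sigma of {1,...,d} with sigma(i0) != i0 for some i0, the readout R([psi])_i = |<e_{sigma(i)}, psi>| is round-metric non-expanding with respect to Fubini–Study distance (indeed satisfies the same distance inequality as Born), but fails calibration: R([e_{i0}]) != e_{i0}. -/
/-! Expanding `⟪φ, ψ⟫` in the basis and applying the triangle inequality bounds `|⟪φ, ψ⟫|` by the
sum `∑ |⟪b i, ψ⟫| |⟪b i, φ⟫|`, which is invariant under reindexing the basis by `σ`; since `arccos`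
is antitone this gives the distance inequality. Calibration fails because the `i0`-th entry of the
readout of `b i0` is `|⟪b (σ i0), b i0⟫| = 0`. -/

open Finset

noncomputable def dFS {d : ℕ} (ψ φ : EuclideanSpace ℂ (Fin d)) : ℝ :=
  Real.arccos ‖(inner ℂ φ ψ : ℂ)‖

/-- The permuted Born readout in the basis `b`. -/
noncomputable def RPerm {d : ℕ}
    (b : OrthonormalBasis (Fin d) ℂ (EuclideanSpace ℂ (Fin d)))
    (σ : Equiv.Perm (Fin d)) (ψ : EuclideanSpace ℂ (Fin d)) : Fin d → ℝ :=
  fun i => ‖(inner ℂ (b (σ i)) ψ : ℂ)‖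

theorem OrthonormalBasis.norm_inner_le_sum_norm_inner_mul_norm_inner
    {ι 𝕜 E : Type*} [Fintype ι] [RCLike 𝕜] [NormedAddCommGroup E] [InnerProductSpace 𝕜 E]
    (b : OrthonormalBasis ι 𝕜 E) (φ ψ : E) :
    ‖(inner 𝕜 φ ψ : 𝕜)‖ ≤ ∑ i, ‖(inner 𝕜 (b i) ψ : 𝕜)‖ * ‖(inner 𝕜 (b i) φ : 𝕜)‖ :=
  calc ‖(inner 𝕜 φ ψ : 𝕜)‖ = ‖∑ i, inner 𝕜 φ (b i) * inner 𝕜 (b i) ψ‖ := by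
        rw [b.sum_inner_mul_inner]
    _ ≤ ∑ i, ‖inner 𝕜 φ (b i) * inner 𝕜 (b i) ψ‖ := norm_sum_le _ _
    _ = ∑ i, ‖(inner 𝕜 (b i) ψ : 𝕜)‖ * ‖(inner 𝕜 (b i) φ : 𝕜)‖ := by
        simp only [norm_mul, norm_inner_symm φ, mul_comm]

section RPerm

variable {d : ℕ} (b : OrthonormalBasis (Fin d) ℂ (EuclideanSpace ℂ (Fin d)))
  (σ : Equiv.Perm (Fin d))

theorem norm_inner_le_sum_RPerm_mul_RPerm (ψ φ : EuclideanSpace ℂ (Fin d)) :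
    ‖(inner ℂ φ ψ : ℂ)‖ ≤ ∑ i, RPerm b σ ψ i * RPerm b σ φ i := by
  simp only [RPerm]
  rw [Equiv.sum_comp σ (fun j => ‖(inner ℂ (b j) ψ : ℂ)‖ * ‖(inner ℂ (b j) φ : ℂ)‖)]
  exact b.norm_inner_le_sum_norm_inner_mul_norm_inner φ ψ

theorem dround_RPerm_le_dFS (ψ φ : EuclideanSpace ℂ (Fin d)) :
    dround (RPerm b σ ψ) (RPerm b σ φ) ≤ dFS ψ φ :=
  Real.arccos_le_arccos (norm_inner_le_sum_RPerm_mul_RPerm b σ ψ φ)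

theorem RPerm_basis_apply_of_ne {i : Fin d} (hσ : σ i ≠ i) : RPerm b σ (b i) i = 0 := by
  simp only [RPerm, b.orthonormal.2 hσ, norm_zero]

theorem RPerm_basis_ne_stdVec {i : Fin d} (hσ : σ i ≠ i) : RPerm b σ (b i) ≠ stdVec i := by
  intro h
  have := congr_fun h i
  simp [RPerm_basis_apply_of_ne b σ hσ, stdVec] at this

end RPerm

theorem permuted_born_counterexample {d : ℕ}
    (b : OrthonormalBasis (Fin d) ℂ (EuclideanSpace ℂ (Fin d)))
    (σ : Equiv.Perm (Fin d)) (i0 : Fin d) (hσ : σ i0 ≠ i0) :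
    (∀ ψ φ : EuclideanSpace ℂ (Fin d), ‖ψ‖ = 1 → ‖φ‖ = 1 →
      dround (RPerm b σ ψ) (RPerm b σ φ) ≤ dFS ψ φ) ∧
    RPerm b σ (b i0) ≠ stdVec i0 :=
  ⟨fun ψ φ _ _ => dround_RPerm_le_dFS b σ ψ φ, RPerm_basis_ne_stdVec b σ hσ⟩
end
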